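/- Suppose the polynomial F(u) = Σ_{n=0}^{N} b_n u^n of degree N with complex coefficients satisfies the functional equation F(u) = ω c^N u^N F(1/(c^2 u)) for some nonzero constants ω, c ∈ ℂ (meaning b_n = ω c^{2n - N} b'_{N-n} where b'_n are the coefficients appearing on the dual side). Then for any 0 ≤ A < N, F(1/c) = Σ_{n=0}^{A} b_n c^{-n} + ω Σ_{n=0}^{N - A - 1} b'_n c^{-n}. -/

import Mathlib

/-! At `u = 1/c` the functional equation matches the `n`-th term `b_n c^{-n}` with
`ω b'_{N-n} c^{-(N-n)}`, because `c^{2n-N} c^{-n} = c^{-(N-n)}`. Splitting `F(1/c)` after the term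
of index `A` and reflecting the tail `A < n ≤ N` onto `0 ≤ N - n < N - A` gives the claim. -/

theorem mul_inv_pow_eq_of_functional_equation {K : Type*} [Field K] {N n : ℕ} (hn : n ≤ N)
    {b b' : ℕ → K} {ω c : K} (hc : c ≠ 0)
    (hfe : b n = ω * c ^ (2 * (n : ℤ) - (N : ℤ)) * b' (N - n)) :
    b n * c⁻¹ ^ n = ω * (b' (N - n) * c⁻¹ ^ (N - n)) := by
  have hpow : c ^ (2 * (n : ℤ) - (N : ℤ)) * c⁻¹ ^ n = c⁻¹ ^ (N - n) := by
    rw [← zpow_natCast, ← zpow_natCast, inv_zpow', inv_zpow', ← zpow_add₀ hc, Nat.cast_sub hn]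
    ring_nf
  rw [hfe, ← hpow]
  ring

theorem stmt_14_general (N A : ℕ) (hA : A < N) (b b' : ℕ → ℂ) (ω c : ℂ)
    (hc : c ≠ 0)
    (hfe : ∀ n ≤ N, b n = ω * c ^ (2 * (n : ℤ) - (N : ℤ)) * b' (N - n)) :
    ∑ n ∈ Finset.range (N + 1), b n * c⁻¹ ^ n
      = ∑ n ∈ Finset.range (A + 1), b n * c⁻¹ ^ n
        + ω * ∑ n ∈ Finset.range (N - A), b' n * c⁻¹ ^ n := by
  rw [show N + 1 = (A + 1) + (N - A) by omega, Finset.sum_range_add, add_right_inj,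
    ← Finset.sum_range_reflect, Finset.mul_sum]
  refine Finset.sum_congr rfl fun i hi => ?_
  rw [Finset.mem_range] at hi
  rw [mul_inv_pow_eq_of_functional_equation (by omega) hc (hfe _ (by omega)),
    show N - (A + 1 + (N - A - 1 - i)) = i by omega]

/-- abstract approximate functional equation. If the degree-`N`
polynomial `F(u) = Σ_{n≤N} b_n u^n` satisfies `F(u) = ω c^N u^N F'(1/(c²u))`,
i.e. `b_n = ω c^{2n-N} b'_{N-n}`, with `ω, c ≠ 0`, then for `0 ≤ A < N`,
`F(1/c) = Σ_{n=0}^{A} b_n c^{-n} + ω Σ_{n=0}^{N-A-1} b'_n c^{-n}`. -/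
theorem stmt_14 (N A : ℕ) (hA : A < N) (b b' : ℕ → ℂ) (ω c : ℂ)
    (hω : ω ≠ 0) (hc : c ≠ 0)
    (hfe : ∀ n ≤ N, b n = ω * c ^ (2 * (n : ℤ) - (N : ℤ)) * b' (N - n)) :
    ∑ n ∈ Finset.range (N + 1), b n * c⁻¹ ^ n
      = ∑ n ∈ Finset.range (A + 1), b n * c⁻¹ ^ n
        + ω * ∑ n ∈ Finset.range (N - A), b' n * c⁻¹ ^ n :=
  stmt_14_general N A hA b b' ω c hc hfe
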